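/- The admissible state set G = { U = (ρ, m, B, E) : ρ > 0 and E - (|m|²/ρ + |B|²)/2 > 0 } is a convex subset of ℝ⁸. -/

import Mathlib

/-!
The internal energy `E - (|m|²/ρ + |B|²)/2` is concave on the half-space `ρ > 0`: `E` is linear,
`|B|²` is convex, and `|m|²/ρ` is jointly convex in `(ρ, m)`, being a sum of perspectives `x²/ρ`
of the convex function `x²`. So `G` is a strict superlevel set of a concave function on a convex
domain.
-/

open Finset Set

theorem sq_add_div_add_le {a b ρ₁ ρ₂ : ℝ} (x₁ x₂ : ℝ) (ha : 0 ≤ a) (hb : 0 ≤ b)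
    (hρ₁ : 0 < ρ₁) (hρ₂ : 0 < ρ₂) :
    (a * x₁ + b * x₂) ^ 2 / (a * ρ₁ + b * ρ₂) ≤ a * (x₁ ^ 2 / ρ₁) + b * (x₂ ^ 2 / ρ₂) := by
  rcases (by positivity : 0 ≤ a * ρ₁ + b * ρ₂).eq_or_lt with h | h
  · rw [← h, div_zero]
    positivity
  · rw [mul_div_assoc', mul_div_assoc', div_add_div _ _ hρ₁.ne' hρ₂.ne',
      div_le_div_iff₀ h (by positivity)]
    -- after cross-multiplying, the gap is exactly `a b (x₁ ρ₂ - x₂ ρ₁)²`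
    nlinarith [mul_nonneg (mul_nonneg ha hb) (sq_nonneg (x₁ * ρ₂ - x₂ * ρ₁))]

variable {ι : Type*} [Fintype ι]

theorem convexOn_sum_sq_div :
    ConvexOn ℝ {p : ℝ × (ι → ℝ) | 0 < p.1} fun p => (∑ i, p.2 i ^ 2) / p.1 := by
  refine ⟨convex_halfSpace_gt (LinearMap.fst ℝ ℝ _).isLinear 0, ?_⟩
  rintro ⟨ρ₁, x₁⟩ (hρ₁ : 0 < ρ₁) ⟨ρ₂, x₂⟩ (hρ₂ : 0 < ρ₂) a b ha hb -
  simp only [Prod.smul_mk, Prod.mk_add_mk, smul_eq_mul, Pi.add_apply, Pi.smul_apply, sum_div,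
    mul_sum, ← sum_add_distrib]
  exact sum_le_sum fun i _ => sq_add_div_add_le _ _ ha hb hρ₁ hρ₂

theorem convexOn_sum_sq : ConvexOn ℝ univ fun x : ι → ℝ => ∑ i, x i ^ 2 := by
  refine ⟨convex_univ, fun x _ y _ a b ha hb hab => ?_⟩
  simp only [smul_eq_mul, Pi.add_apply, Pi.smul_apply, mul_sum, ← sum_add_distrib]
  exact sum_le_sum fun i _ => even_two.convexOn_pow.2 trivial trivial ha hb hab

noncomputable def internalEnergy (U : ℝ × (ι → ℝ) × (ι → ℝ) × ℝ) : ℝ :=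
  U.2.2.2 - ((∑ i, U.2.1 i ^ 2) / U.1 + ∑ i, U.2.2.1 i ^ 2) / 2

theorem concaveOn_internalEnergy :
    ConcaveOn ℝ {U : ℝ × (ι → ℝ) × (ι → ℝ) × ℝ | 0 < U.1} internalEnergy := by
  have hs : Convex ℝ {U : ℝ × (ι → ℝ) × (ι → ℝ) × ℝ | 0 < U.1} :=
    convex_halfSpace_gt (LinearMap.fst ℝ ℝ _).isLinear 0
  have kinetic := convexOn_sum_sq_div.comp_linearMap
    ((LinearMap.fst ℝ ℝ _).prod ((LinearMap.fst ℝ (ι → ℝ) ((ι → ℝ) × ℝ)).comp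
      (LinearMap.snd ℝ ℝ _)))
  have magnetic := (convexOn_sum_sq.comp_linearMap ((LinearMap.fst ℝ (ι → ℝ) ℝ).comp
    ((LinearMap.snd ℝ (ι → ℝ) _).comp (LinearMap.snd ℝ ℝ _)))).subset (subset_univ _) hs
  have energy := ((LinearMap.snd ℝ (ι → ℝ) ℝ).comp
    ((LinearMap.snd ℝ (ι → ℝ) _).comp (LinearMap.snd ℝ ℝ _))).concaveOn hs
  refine (energy.sub ((kinetic.add magnetic).smul (by norm_num : (0 : ℝ) ≤ 1 / 2))).congr
    fun U _ => ?_
  simp only [LinearMap.coe_comp, LinearMap.coe_snd, LinearMap.coe_fst, LinearMap.prod_apply,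
    Function.comp_apply, Function.prod_apply, Pi.add_apply, Pi.sub_apply, smul_eq_mul,
    internalEnergy]
  ring

theorem admissible_set_convex :
    Convex ℝ {U : ℝ × (Fin 3 → ℝ) × (Fin 3 → ℝ) × ℝ |
      0 < U.1 ∧ 0 < U.2.2.2 - ((∑ i, (U.2.1 i) ^ 2) / U.1 + ∑ i, (U.2.2.1 i) ^ 2) / 2} :=
  concaveOn_internalEnergy.convex_gt 0
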